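/- arXiv:2510.23789 — 4 statements merged into one kernel-verified Lean document; each statement's English description precedes it below -/
import Mathlib

section
/- Slice theorem for limit sketches: Let L be a category equipped with a family of marked cones, each marked cone consisting of a small category J, an object x of L, and a functor S : J ⥤ Under x, and let M : L ⥤ Type be a model of this sketch. Equip the category of elements El(M) with the induced sketch whose marked cones are all functors T : J ⥤ Under e (for e an object of El(M)) such that composing T with the functor Under e ⥤ Under (π_M(e)) induced by the projection π_M : El(M) ⥤ L equals a marked cone S of L with vertex π_M(e). Then the category whose objects are pairs (N, α) with N : L ⥤ Type a model of the sketch on L and α : N ⟶ M a natural transformation, and whose morphisms (N, α) ⟶ (N', α') are natural transformations β : N ⟶ N' with α' ∘ β = α, is equivalent to the category of models of the induced sketch on El(M). -/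
open CategoryTheory

universe w v u

/-- The canonical map from `M.obj a` to the sections of `S ⋙ Under.forget a ⋙ M`,
for a cone `S : J ⥤ Under a` with vertex `a`, sending `m` to the family
`j ↦ M.map (S.obj j).hom m`. -/
def canonicalSectionsMap {A : Type*} [Category A] {J : Type*} [Category J]
    (M : A ⥤ Type*) {a : A} (S : J ⥤ Under a) (m : M.obj a) :
    (S ⋙ Under.forget a ⋙ M).sections :=
  ⟨fun j => M.map (S.obj j).hom m, by
    intro j j' f
    have h := congrArg (fun g => M.map g m) (Under.w (S.map f))
    dsimp only at h ⊢
    rw [Functor.map_comp] at h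
    exact h⟩

/-- A limit sketch structure on a category `L`: a family of marked cones, each
given by a small category `J`, a vertex `x : L`, and a functor `J ⥤ Under x`. -/
structure Sketch (L : Type u) [Category.{v} L] where
  /-- the index of the family of marked cones -/
  ι : Type w
  /-- the (small) domain category of each marked cone -/
  J : ι → Cat.{v, v}
  /-- the vertex of each marked cone -/
  vertex : ι → L
  /-- the marked cones -/
  cone : ∀ i, J i ⥤ Under (vertex i)

/-- A functor `M : L ⥤ Type` is a model of a sketch on `L` if, for every marked cone,
the canonical map from the value of `M` at the vertex to the sections of the composite
of the cone with `M` is a bijection. -/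
def Sketch.IsModel {L : Type u} [Category.{v} L] (sk : Sketch.{w} L)
    (M : L ⥤ Type v) : Prop :=
  ∀ i : sk.ι, Function.Bijective (canonicalSectionsMap M (sk.cone i))

/-- The sketch induced on the category of elements of `M : L ⥤ Type` by a sketch on `L`:
its marked cones are all functors `T : J ⥤ Under e` whose composite with the functor
`Under e ⥤ Under (π_M(e))` induced by the projection `π_M` equals a marked cone of `L`
with vertex `π_M(e)`. -/
def Sketch.elements {L : Type u} [Category.{v} L] (sk : Sketch.{w} L)
    (M : L ⥤ Type v) : Sketch.{max w u v} M.Elements where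
  ι := { t : Σ (i : sk.ι) (e : M.Elements), ((sk.J i : Type v) ⥤ Under e) //
      ∃ h : (CategoryOfElements.π M).obj t.2.1 = sk.vertex t.1,
        t.2.2 ⋙ Under.post (CategoryOfElements.π M) =
          sk.cone t.1 ⋙ Under.map (eqToHom h) }
  J t := sk.J t.1.1
  vertex t := t.1.2.1
  cone t := t.1.2.2


/-!
An object `α : N ⟶ M` of `Over M` is the same as the functor on `El(M)` sending `(a, m)` to the
fibre `α⁻¹(m) ⊆ N(a)`; conversely `F : El(M) ⥤ Type` gives `a ↦ Σ m, F(a, m)` over `M`.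
Since `Under e ⥤ Under (π_M e)` is faithful and injective on objects, the marked cones of the
induced sketch at `e = (x, m)` are exactly the lifts through `m` of the marked cones with vertex
`x`. As `M` is a model, a compatible family for a cone `S` in `N` lies over the family of a unique
`m : M x`, and is then a compatible family for the lift of `S` in the fibre functor. Hence `N` is a
model iff its fibre functor is, and the equivalence restricts to models because being a model is
invariant under isomorphism.
-/

theorem CategoryTheory.Functor.eq_of_comp_eq_of_faithful {C D E : Type*} [Category C]
    [Category D] [Category E] {T T' : C ⥤ D} (G : D ⥤ E) [G.Faithful]
    (hG : Function.Injective G.obj) (h : T ⋙ G = T' ⋙ G) : T = T' :=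
  Functor.ext (fun c => hG (Functor.congr_obj h c)) fun c c' f => G.map_injective (by
    rw [G.map_comp, G.map_comp, eqToHom_map, eqToHom_map]
    exact Functor.congr_hom h f)

lemma canonicalSectionsMap_bijective_of_iso {A J : Type*} [Category A] [Category J]
    {N N' : A ⥤ Type w} (e : N ≅ N') {a : A} (S : J ⥤ Under a)
    (h : Function.Bijective (canonicalSectionsMap N S)) :
    Function.Bijective (canonicalSectionsMap N' S) := by
  let φ := (Functor.sectionsFunctor J).mapIso (Functor.isoWhiskerLeft (S ⋙ Under.forget a) e)
  have hcomm : canonicalSectionsMap N' S ∘ e.hom.app a = φ.hom ∘ canonicalSectionsMap N S := by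
    funext m
    exact Subtype.ext (funext fun j => (NatTrans.naturality_apply e.hom (S.obj j).hom m).symm)
  rw [← Function.Bijective.of_comp_iff _ (e.app a).toEquiv.bijective]
  exact hcomm ▸ φ.toEquiv.bijective.comp h

lemma Sketch.IsModel.of_iso {L : Type u} [Category.{v} L] {sk : Sketch.{w} L}
    {N N' : L ⥤ Type v} (e : N ≅ N') (hN : sk.IsModel N) : sk.IsModel N' :=
  fun i => canonicalSectionsMap_bijective_of_iso e _ (hN i)

namespace OverElements

variable {L : Type u} [Category.{v} L] {M : L ⥤ Type v}

def fiber (X : Over M) : M.Elements ⥤ Type v where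
  obj e := { n : X.left.obj e.1 // X.hom.app e.1 n = e.2 }
  map f := ↾fun n => ⟨X.left.map f.1 n.1, by
    rw [NatTrans.naturality_apply X.hom f.1 n.1, n.2, f.2]⟩

def elementsHom {a b : L} (f : a ⟶ b) (m : M.obj a) :
    M.elementsMk a m ⟶ M.elementsMk b (M.map f m) :=
  ⟨f, rfl⟩

section Total

variable (F : M.Elements ⥤ Type v)

lemma sigma_mk_map_eq {a : L} {e : M.Elements} {m m' : M.obj a}
    (f : e ⟶ M.elementsMk a m) (g : e ⟶ M.elementsMk a m') (hfg : f.1 = g.1) (u : F.obj e) :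
    (⟨m, F.map f u⟩ : Σ m : M.obj a, F.obj (M.elementsMk a m)) = ⟨m', F.map g u⟩ := by
  obtain rfl : m = m' := f.2.symm.trans (hfg ▸ g.2)
  obtain rfl : f = g := Subtype.ext hfg
  rfl

def total : L ⥤ Type v where
  obj a := Σ m : M.obj a, F.obj (M.elementsMk a m)
  map f := ↾fun p => ⟨M.map f p.1, F.map (elementsHom f p.1) p.2⟩
  map_id a := by
    refine ConcreteCategory.hom_ext _ _ fun ⟨m, u⟩ => ?_
    exact (sigma_mk_map_eq F (elementsHom (𝟙 a) m) (𝟙 _) rfl u).trans (by rw [F.map_id]; rfl)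
  map_comp f g := by
    refine ConcreteCategory.hom_ext _ _ fun ⟨m, u⟩ => ?_
    exact (sigma_mk_map_eq F (elementsHom (f ≫ g) m) (elementsHom f m ≫ elementsHom g _)
      rfl u).trans (by rw [F.map_comp]; rfl)

def totalProj : total F ⟶ M where
  app a := ↾Sigma.fst

end Total

variable (M) in
def toFunctor : Over M ⥤ (M.Elements ⥤ Type v) where
  obj := fiber
  map g :=
    { app e := ↾fun n => ⟨g.left.app e.1 n.1,
        (ConcreteCategory.congr_hom (NatTrans.congr_app (Over.w g) e.1) n.1).trans n.2⟩
      naturality _ _ f := by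
        ext n : 3
        apply Subtype.ext
        exact ConcreteCategory.congr_hom (g.left.naturality f.1) n.1 }

variable (M) in
def ofFunctor : (M.Elements ⥤ Type v) ⥤ Over M where
  obj F := Over.mk (totalProj F)
  map τ := Over.homMk
    { app a := ↾fun p => ⟨p.1, τ.app _ p.2⟩
      naturality a b f := by
        ext p : 3
        exact congrArg (Sigma.mk _) (NatTrans.naturality_apply τ (elementsHom f p.1) p.2) }

variable (M) in
def overEquiv : Over M ≌ (M.Elements ⥤ Type v) :=
  CategoryTheory.Equivalence.mk (toFunctor M) (ofFunctor M)
    (NatIso.ofComponents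
      (fun X => Over.isoMk
        (NatIso.ofComponents (fun a => (Equiv.sigmaFiberEquiv (X.hom.app a)).symm.toIso)
          (fun f => by
            ext n : 3
            exact (Equiv.sigmaFiberEquiv _).injective rfl)))
      (fun g => by
        ext a n : 6
        exact (Equiv.sigmaFiberEquiv _).injective rfl))
    (NatIso.ofComponents
      (fun F => NatIso.ofComponents
        (fun e => (Equiv.sigmaSubtype (β := fun m => F.obj (M.elementsMk e.1 m)) e.2).symm.toIso)
        (fun f => by
          ext u : 3
          exact Subtype.ext (sigma_mk_map_eq F f (elementsHom f.1 _) rfl u)))).symm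

section Cones

variable {J : Type*} [Category J] {a : L} (S : J ⥤ Under a)

def liftCone (m : M.obj a) : J ⥤ Under (M.elementsMk a m) where
  obj j := Under.mk (elementsHom (S.obj j).hom m)
  map {j j'} φ := Under.homMk ⟨(S.map φ).right, by
      change M.map (S.map φ).right (M.map (S.obj j).hom m) = M.map (S.obj j').hom m
      rw [← Functor.map_comp_apply, Under.w]⟩
    (CategoryOfElements.ext _ _ _ (Under.w (S.map φ)))

lemma liftCone_comp_post (m : M.obj a) :
    liftCone S m ⋙ Under.post (CategoryOfElements.π M) = S :=
  rfl

lemma post_π_obj_injective (e : M.Elements) :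
    Function.Injective (Under.post (X := e) (CategoryOfElements.π M)).obj := by
  rintro ⟨⟨⟨⟩⟩, ⟨b, n⟩, f, hf⟩ ⟨⟨⟨⟩⟩, ⟨b', n'⟩, f', hf'⟩ h
  obtain ⟨-, rfl, h⟩ := Comma.mk.inj h
  obtain rfl := eq_of_heq h
  obtain rfl : n = n' := hf.symm.trans hf'
  rfl

lemma eq_liftCone {m : M.obj a} (T : J ⥤ Under (M.elementsMk a m))
    (hT : T ⋙ Under.post (CategoryOfElements.π M) = S) : T = liftCone S m :=
  Functor.eq_of_comp_eq_of_faithful _ (post_π_obj_injective _)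
    (hT.trans (liftCone_comp_post S m).symm)

lemma canonicalSectionsMap_hom_app (X : Over M) (n : X.left.obj a) :
    canonicalSectionsMap M S (X.hom.app a n) =
      (Functor.sectionsFunctor J).map (Functor.whiskerLeft (S ⋙ Under.forget a) X.hom)
        (canonicalSectionsMap X.left S n) :=
  Subtype.ext (funext fun j => (NatTrans.naturality_apply X.hom (S.obj j).hom n).symm)

lemma bijective_canonicalSectionsMap_fiber (X : Over M)
    (hM : Function.Injective (canonicalSectionsMap M S))
    (hX : Function.Bijective (canonicalSectionsMap X.left S)) (m : M.obj a) :
    Function.Bijective (canonicalSectionsMap (fiber X) (liftCone S m)) := by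
  constructor
  · intro n n' h
    refine Subtype.ext (hX.1 (Subtype.ext (funext fun j => ?_)))
    exact congrArg Subtype.val (congrFun (congrArg Subtype.val h) j)
  · intro s
    obtain ⟨n, hn⟩ := hX.2 ⟨fun j => (s.1 j).1, fun φ => congrArg Subtype.val (s.2 φ)⟩
    have hnm : X.hom.app a n = m := hM (by
      rw [canonicalSectionsMap_hom_app, hn]
      exact Subtype.ext (funext fun j => (s.1 j).2))
    exact ⟨⟨n, hnm⟩, Subtype.ext (funext fun j =>
      Subtype.ext (congrFun (congrArg Subtype.val hn) j))⟩

lemma bijective_canonicalSectionsMap_of_fiber (X : Over M)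
    (hM : Function.Bijective (canonicalSectionsMap M S))
    (hX : ∀ m, Function.Bijective (canonicalSectionsMap (fiber X) (liftCone S m))) :
    Function.Bijective (canonicalSectionsMap X.left S) := by
  constructor
  · intro n n' h
    have hnn' : X.hom.app a n' = X.hom.app a n := hM.1 <|
      (canonicalSectionsMap_hom_app S X n').trans
        ((congrArg _ h.symm).trans (canonicalSectionsMap_hom_app S X n).symm)
    have := (hX _).1 (a₁ := ⟨n, rfl⟩) (a₂ := ⟨n', hnn'⟩)
      (Subtype.ext (funext fun j => Subtype.ext (congrFun (congrArg Subtype.val h) j)))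
    exact congrArg Subtype.val this
  · intro s
    obtain ⟨m, hm⟩ := hM.2
      ((Functor.sectionsFunctor J).map (Functor.whiskerLeft (S ⋙ Under.forget a) X.hom) s)
    obtain ⟨n, hn⟩ := (hX m).2 ⟨fun j => ⟨s.1 j, (congrFun (congrArg Subtype.val hm) j).symm⟩,
      fun φ => Subtype.ext (s.2 φ)⟩
    exact ⟨n.1, Subtype.ext (funext fun j =>
      congrArg Subtype.val (congrFun (congrArg Subtype.val hn) j))⟩

end Cones

end OverElements

open OverElements

lemma Sketch.isModel_elements_iff {L : Type u} [Category.{v} L] (sk : Sketch.{w} L)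
    {M : L ⥤ Type v} (F : M.Elements ⥤ Type v) :
    (sk.elements M).IsModel F ↔ ∀ i (m : M.obj (sk.vertex i)),
      Function.Bijective (canonicalSectionsMap F (liftCone (sk.cone i) m)) := by
  constructor
  · intro hF i m
    refine hF ⟨⟨i, M.elementsMk _ m, liftCone (sk.cone i) m⟩, rfl, ?_⟩
    change _ = sk.cone i ⋙ Under.map (𝟙 _)
    rw [Under.mapId_eq, Functor.comp_id]
    exact liftCone_comp_post _ m
  · rintro hF ⟨⟨i, e, T⟩, h, hT⟩
    obtain ⟨a, m, rfl⟩ : ∃ a m, e = M.elementsMk a m := ⟨e.1, e.2, rfl⟩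
    obtain rfl : a = sk.vertex i := h
    change T ⋙ _ = sk.cone i ⋙ Under.map (𝟙 _) at hT
    rw [Under.mapId_eq, Functor.comp_id] at hT
    obtain rfl := eq_liftCone _ T hT
    exact hF i m

lemma Sketch.isModel_iff_isModel_fiber {L : Type u} [Category.{v} L] (sk : Sketch.{w} L)
    {M : L ⥤ Type v} (hM : sk.IsModel M) (X : Over M) :
    sk.IsModel X.left ↔ (sk.elements M).IsModel (fiber X) := by
  rw [isModel_elements_iff]
  exact forall_congr' fun i => ⟨bijective_canonicalSectionsMap_fiber _ X (hM i).1,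
    bijective_canonicalSectionsMap_of_fiber _ X (hM i)⟩

/-- Slice theorem for limit sketches: for a model `M` of a sketch on `L`, the category
of models over `M` (pairs of a model `N` and a natural transformation `N ⟶ M`, with
morphisms the natural transformations commuting with the legs to `M`) is equivalent to
the category of models of the induced sketch on the category of elements of `M`. -/
theorem sketch_slice_theorem {L : Type u} [Category.{v} L] (sk : Sketch.{w} L)
    (M : L ⥤ Type v) (hM : sk.IsModel M) :
    Nonempty
      (ObjectProperty.FullSubcategory (fun X : Over M => sk.IsModel X.left) ≌
        ObjectProperty.FullSubcategory (fun N : M.Elements ⥤ Type v => (sk.elements M).IsModel N)) := by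
  have : ObjectProperty.IsClosedUnderIsomorphisms
      (fun N : M.Elements ⥤ Type v => (sk.elements M).IsModel N) := ⟨fun e hN => hN.of_iso e⟩
  exact ⟨(overEquiv M).congrFullSubcategory
    (funext fun X => propext (sk.isModel_iff_isModel_fiber hM X).symm)⟩
end

section
/- Let q : D ⥤ B be a discrete opfibration and let f : E ⥤ D be any functor. Then f is an opfibration if and only if the composite f ⋙ q is an opfibration. -/
open CategoryTheory

/-- A functor `q : D ⥤ B` is a discrete opfibration if every morphism
`u : q.obj d ⟶ b` has a unique lift with domain `d`. -/
def IsDiscreteOpfibration {D : Type*} [Category D] {B : Type*} [Category B]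
    (q : D ⥤ B) : Prop :=
  ∀ (d : D) (b : B) (u : q.obj d ⟶ b),
    ∃! p : Σ d' : D, d ⟶ d', ∃ h : q.obj p.1 = b, q.map p.2 ≫ eqToHom h = u

/-- A morphism `φ : x ⟶ y` is strongly `p`-opcartesian if every `ψ : x ⟶ z` whose
image factors through `p.map φ` factors uniquely through `φ` by a morphism with the
prescribed image. -/
def IsStronglyOpcartesian {E : Type*} [Category E] {B : Type*} [Category B]
    (p : E ⥤ B) {x y : E} (φ : x ⟶ y) : Prop :=
  ∀ (z : E) (ψ : x ⟶ z) (v : p.obj y ⟶ p.obj z),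
    p.map ψ = p.map φ ≫ v → ∃! χ : y ⟶ z, p.map χ = v ∧ φ ≫ χ = ψ

/-- A functor `p : E ⥤ B` is an opfibration if every morphism `u : p.obj e ⟶ b`
admits a strongly `p`-opcartesian lift with domain `e`. -/
def IsOpfibration {E : Type*} [Category E] {B : Type*} [Category B]
    (p : E ⥤ B) : Prop :=
  ∀ (e : E) (b : B) (u : p.obj e ⟶ b),
    ∃ (e' : E) (φ : e ⟶ e'), IsStronglyOpcartesian p φ ∧
      ∃ h : p.obj e' = b, p.map φ ≫ eqToHom h = u

section Aux

variable {D : Type*} [Category D] {B : Type*} [Category B] {q : D ⥤ B}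

lemma disc_eq (hq : IsDiscreteOpfibration q) {x d₁ d₂ : D} (g₁ : x ⟶ d₁) (g₂ : x ⟶ d₂)
    (hd : q.obj d₁ = q.obj d₂) (hg : q.map g₁ ≫ eqToHom hd = q.map g₂) :
    (⟨d₁, g₁⟩ : Σ d', x ⟶ d') = ⟨d₂, g₂⟩ := by
  obtain ⟨p, hp, hun⟩ := hq x (q.obj d₂) (q.map g₂)
  have h1 := hun ⟨d₁, g₁⟩ ⟨hd, hg⟩
  have h2 := hun ⟨d₂, g₂⟩ ⟨rfl, by simp⟩
  rw [h1, h2]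

lemma disc_faithful (hq : IsDiscreteOpfibration q) {x d : D} (g₁ g₂ : x ⟶ d)
    (hg : q.map g₁ = q.map g₂) : g₁ = g₂ := by
  simpa using disc_eq hq g₁ g₂ rfl (by simpa using hg)

lemma disc_opcart (hq : IsDiscreteOpfibration q) {x y : D} (φ : x ⟶ y) :
    IsStronglyOpcartesian q φ := by
  intro z ψ v hv
  obtain ⟨⟨z', χ⟩, ⟨h, hχ⟩, -⟩ := hq y (q.obj z) v
  have heq : (⟨z', φ ≫ χ⟩ : Σ d', x ⟶ d') = ⟨z, ψ⟩ :=
    disc_eq hq _ _ h (by rw [Functor.map_comp, Category.assoc, hχ, hv])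
  injection heq with h1 h2
  subst h1
  have h2' : φ ≫ χ = ψ := eq_of_heq h2
  have hχ' : q.map χ = v := by simpa using hχ
  exact ⟨χ, ⟨hχ', h2'⟩, fun χ'' ⟨ha, hb⟩ => disc_faithful hq _ _ (by rw [ha, hχ'])⟩

lemma opcart_iff {E : Type*} [Category E] (hq : IsDiscreteOpfibration q) (f : E ⥤ D)
    {x y : E} (φ : x ⟶ y) :
    IsStronglyOpcartesian f φ ↔ IsStronglyOpcartesian (f ⋙ q) φ := by
  constructor
  · intro hφ z ψ w hw
    obtain ⟨⟨d', v₀⟩, ⟨h, hv⟩, -⟩ := hq (f.obj y) (q.obj (f.obj z)) w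
    have heq : (⟨d', f.map φ ≫ v₀⟩ : Σ d', f.obj x ⟶ d') = ⟨f.obj z, f.map ψ⟩ :=
      disc_eq hq _ _ h (by
        rw [Functor.map_comp, Category.assoc, hv]
        exact hw.symm)
    injection heq with h1 h2
    subst h1
    have h2' : f.map φ ≫ v₀ = f.map ψ := eq_of_heq h2
    have hv' : q.map v₀ = w := by simpa using hv
    obtain ⟨χ, ⟨hχ1, hχ2⟩, hχu⟩ := hφ z ψ v₀ h2'.symm
    refine ⟨χ, ⟨by simpa [hχ1] using hv', hχ2⟩, ?_⟩
    rintro χ' ⟨ha, hb⟩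
    refine hχu χ' ⟨?_, hb⟩
    exact disc_faithful hq _ _ (by rw [hv']; exact ha)
  · intro hφ z ψ v hv
    obtain ⟨χ, ⟨hχ1, hχ2⟩, hχu⟩ := hφ z ψ (q.map v)
      (by simpa using congrArg q.map hv)
    have hfχ : f.map χ = v := disc_faithful hq _ _ hχ1
    exact ⟨χ, ⟨hfχ, hχ2⟩, fun χ' ⟨ha, hb⟩ =>
      hχu χ' ⟨by simp [Functor.comp_map, ha], hb⟩⟩

end Aux

theorem isOpfibration_iff_comp {E D B : Type*}
    [Category E] [Category D] [Category B]
    (q : D ⥤ B) (hq : IsDiscreteOpfibration q) (f : E ⥤ D) :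
    IsOpfibration f ↔ IsOpfibration (f ⋙ q) := by
  constructor
  · intro hf e b u
    obtain ⟨⟨d, θ⟩, ⟨h, hθ⟩, -⟩ := hq (f.obj e) b u
    obtain ⟨e', φ, hcart, h', hφ⟩ := hf e d θ
    refine ⟨e', φ, (opcart_iff hq f φ).mp hcart, show q.obj (f.obj e') = b by rw [h']; exact h, ?_⟩
    rw [← hθ, ← hφ]
    simp [eqToHom_map]
  · intro hfq e d u
    obtain ⟨e', φ, hcart, h, hφ⟩ := hfq e (q.obj d) (q.map u)
    have heq : (⟨f.obj e', f.map φ⟩ : Σ d', f.obj e ⟶ d') = ⟨d, u⟩ :=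
      disc_eq hq _ _ h hφ
    injection heq with h1 h2
    subst h1
    exact ⟨e', φ, (opcart_iff hq f φ).mpr hcart, rfl, by simpa using eq_of_heq h2⟩
end

section
/- Let M : A ⥤ Type be a functor and a an object of A. Then the set of functors L : Under a ⥤ El(M) satisfying L ⋙ π_M = Under.forget a is in bijection with the set M.obj a; the bijection sends a lift L to the element of M.obj a carried by the image under L of the object 𝟙_a of Under a. -/
open CategoryTheory

/-!
A lift `L` of `Under.forget a` is pinned down by the element `m` carried by `L.obj (𝟙 a)`:
every `f : a ⟶ x` is a morphism `𝟙 a ⟶ f` of `Under a`, and its image under `L` is a morphism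
of elements out of `(a, m)` lying over `f`, which forces `L.obj f = (x, M.map f m)`. Since the
projection `π M` is faithful, `L` is then determined on morphisms as well.
-/

namespace CategoryTheory

lemma Functor.ext_of_comp_faithful {C D E : Type*} [Category C] [Category D] [Category E]
    {F G : C ⥤ D} (H : D ⥤ E) [H.Faithful] (h : F ⋙ H = G ⋙ H)
    (hobj : ∀ X, F.obj X = G.obj X) : F = G :=
  Functor.ext hobj fun _ _ f => H.map_injective <| by
    rw [Functor.map_comp, Functor.map_comp, eqToHom_map, eqToHom_map]
    exact Functor.congr_hom h f

namespace CategoryOfElements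

variable {A : Type*} [Category A] (M : A ⥤ Type*) {a : A}

def underLift (m : M.obj a) : Under a ⥤ M.Elements where
  obj u := ⟨u.right, M.map u.hom m⟩
  map g := ⟨g.right, by simp only [← Functor.map_comp_apply, Under.w]⟩

lemma underLift_comp_π (m : M.obj a) : underLift M m ⋙ π M = Under.forget a :=
  rfl

variable {M}

def elementOfLift {L : Under a ⥤ M.Elements} (hL : L ⋙ π M = Under.forget a) : M.obj a :=
  cast (congrArg M.obj (Functor.congr_obj hL (Under.mk (𝟙 a)))) (L.obj (Under.mk (𝟙 a))).2

lemma elementOfLift_underLift (m : M.obj a) : elementOfLift (underLift_comp_π M m) = m := by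
  simp only [elementOfLift, underLift, Under.mk_hom, Functor.map_id]
  exact cast_eq _ _

lemma eq_mk_map_of_hom_val_eq {x y : M.Elements} (g : x ⟶ y) {b c : A} (hx : x.1 = b)
    (hy : y.1 = c) {φ : b ⟶ c} (hg : g.val = eqToHom hx ≫ φ ≫ eqToHom hy.symm) :
    y = ⟨c, M.map φ (cast (congrArg M.obj hx) x.2)⟩ := by
  obtain ⟨b, x⟩ := x
  obtain ⟨c, y⟩ := y
  dsimp only at hx hy
  subst hx hy
  obtain ⟨g, hgy⟩ := g
  simp only [eqToHom_refl, Category.id_comp, Category.comp_id] at hg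
  subst hg
  exact congrArg _ hgy.symm

lemma eq_underLift {L : Under a ⥤ M.Elements} (hL : L ⋙ π M = Under.forget a) :
    L = underLift M (elementOfLift hL) :=
  Functor.ext_of_comp_faithful (π M) (hL.trans (underLift_comp_π M _).symm) fun u =>
    eq_mk_map_of_hom_val_eq (L.map (Under.homMk u.hom : Under.mk (𝟙 a) ⟶ u)) _
      (Functor.congr_obj hL u) (Functor.congr_hom hL _)

end CategoryOfElements

end CategoryTheory

/-- Lifts of the forgetful functor `Under a ⥤ A` along the projection from the
category of elements of `M : A ⥤ Type` are in bijection with `M.obj a`, the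
bijection carrying a lift `L` to the element carried by the image under `L` of
the object `𝟙 a` of `Under a`. -/
theorem lifts_of_coslice_equiv_fiber {A : Type*} [Category A]
    (M : A ⥤ Type*) (a : A) :
    ∃ e : {L : Under a ⥤ M.Elements // L ⋙ CategoryOfElements.π M = Under.forget a}
        ≃ M.obj a,
      ∀ (L : {L : Under a ⥤ M.Elements // L ⋙ CategoryOfElements.π M = Under.forget a}),
        e L = cast (congrArg M.obj (Functor.congr_obj L.2 (Under.mk (𝟙 a))))
          (L.1.obj (Under.mk (𝟙 a))).2 :=
  ⟨{ toFun := fun L => CategoryOfElements.elementOfLift L.2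
     invFun := fun m =>
       ⟨CategoryOfElements.underLift M m, CategoryOfElements.underLift_comp_π M m⟩
     left_inv := fun L => Subtype.ext (CategoryOfElements.eq_underLift L.2).symm
     right_inv := CategoryOfElements.elementOfLift_underLift },
    fun _ => rfl⟩
end

section
/- In a finitary extensive category C, for all objects a and b the functor Over a × Over b ⥤ Over (a ⨿ b), sending a pair of objects (f : x ⟶ a, g : y ⟶ b) to the coproduct morphism f ⨿ g : x ⨿ y ⟶ a ⨿ b (and acting likewise on morphisms by coproducts), is an equivalence of categories. -/
open CategoryTheory CategoryTheory.Limits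

/-- The functor `Over a × Over b ⥤ Over (a ⨿ b)` sending a pair of objects
`(f : x ⟶ a, g : y ⟶ b)` to `f ⨿ g : x ⨿ y ⟶ a ⨿ b`, and acting on morphisms
by binary coproducts. -/
@[simps]
noncomputable def coprodOver {C : Type*} [Category C] [HasBinaryCoproducts C] (a b : C) :
    Over a × Over b ⥤ Over (a ⨿ b) where
  obj X := Over.mk (coprod.map X.1.hom X.2.hom)
  map {X Y} f := Over.homMk (coprod.map f.1.left f.2.left) (by
    dsimp
    rw [coprod.map_map, Over.w f.1, Over.w f.2])
  map_id X := by
    apply Over.OverMorphism.ext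
    simp
  map_comp f g := by
    apply Over.OverMorphism.ext
    simp

/-! Both halves of the van Kampen property of `a ⨿ b` are used. Since the squares of `f ⨿ g`
over the two injections are pullbacks, a morphism `x ⨿ y ⟶ x' ⨿ y'` over `a ⨿ b` restricts to
a pair of morphisms over `a` and over `b` (fullness; faithfulness only needs the injections to
be monic). Conversely, the pullbacks of any `z ⟶ a ⨿ b` along the two injections have `z` as
their coproduct (essential surjectivity). -/

namespace CategoryTheory.Limits

theorem coprod.map_eq_map_iff {C : Type*} [Category C] [HasBinaryCoproducts C] [MonoCoprod C]
    {x y x' y' : C} (u u' : x ⟶ x') (v v' : y ⟶ y') :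
    coprod.map u v = coprod.map u' v' ↔ u = u' ∧ v = v' := by
  refine ⟨fun h ↦ ⟨?_, ?_⟩, fun ⟨hu, hv⟩ ↦ hu ▸ hv ▸ rfl⟩
  · simpa [cancel_mono] using coprod.inl ≫= h
  · simpa [cancel_mono] using coprod.inr ≫= h

end CategoryTheory.Limits

namespace CategoryTheory.FinitaryExtensive

variable {C : Type*} [Category C] [FinitaryExtensive C]

theorem nonempty_isColimit_iff_isPullback_coprod {a b x y : C} (c : BinaryCofan x y)
    (f : x ⟶ a) (g : y ⟶ b) (h : c.pt ⟶ a ⨿ b)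
    (hf : f ≫ coprod.inl = c.inl ≫ h) (hg : g ≫ coprod.inr = c.inr ≫ h) :
    Nonempty (IsColimit c) ↔
      IsPullback c.inl f h coprod.inl ∧ IsPullback c.inr g h coprod.inr :=
  (BinaryCofan.isVanKampen_iff _).mp (vanKampen _ (coprodIsCoprod a b)) c f g h hf hg

theorem isPullback_coprodMap {a b x y : C} (f : x ⟶ a) (g : y ⟶ b) :
    IsPullback coprod.inl f (coprod.map f g) coprod.inl ∧
      IsPullback coprod.inr g (coprod.map f g) coprod.inr :=
  (nonempty_isColimit_iff_isPullback_coprod (BinaryCofan.mk coprod.inl coprod.inr) f g _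
    (coprod.inl_map f g).symm (coprod.inr_map f g).symm).mp ⟨coprodIsCoprod x y⟩

instance isIso_coprodDesc_pullbackSnd {a b z : C} (h : z ⟶ a ⨿ b) :
    IsIso (coprod.desc (pullback.snd (coprod.inl : a ⟶ a ⨿ b) h)
      (pullback.snd (coprod.inr : b ⟶ a ⨿ b) h)) :=
  (colimit.isColimit _).nonempty_isColimit_iff_isIso_desc.mp <|
    (nonempty_isColimit_iff_isPullback_coprod (BinaryCofan.mk _ _) _ _ h
      pullback.condition pullback.condition).mpr
      ⟨(IsPullback.of_hasPullback (coprod.inl : a ⟶ a ⨿ b) h).flip,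
        (IsPullback.of_hasPullback (coprod.inr : b ⟶ a ⨿ b) h).flip⟩

noncomputable def coprodPullbackIso {a b z : C} (h : z ⟶ a ⨿ b) :
    pullback (coprod.inl : a ⟶ a ⨿ b) h ⨿ pullback (coprod.inr : b ⟶ a ⨿ b) h ≅ z :=
  asIso (coprod.desc (pullback.snd _ _) (pullback.snd _ _))

theorem coprodPullbackIso_hom_comp {a b z : C} (h : z ⟶ a ⨿ b) :
    (coprodPullbackIso h).hom ≫ h = coprod.map (pullback.fst _ _) (pullback.fst _ _) := by
  apply coprod.hom_ext
  · rw [coprodPullbackIso, asIso_hom, coprod.inl_desc_assoc, coprod.inl_map, pullback.condition]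
  · rw [coprodPullbackIso, asIso_hom, coprod.inr_desc_assoc, coprod.inr_map, pullback.condition]

theorem exists_coprodMap_eq_of_comp_coprodMap_eq {a b x y x' y' : C} {f : x ⟶ a} {g : y ⟶ b}
    {f' : x' ⟶ a} {g' : y' ⟶ b} {k : x ⨿ y ⟶ x' ⨿ y'}
    (hk : k ≫ coprod.map f' g' = coprod.map f g) :
    ∃ (u : x ⟶ x') (v : y ⟶ y'), u ≫ f' = f ∧ v ≫ g' = g ∧ coprod.map u v = k := by
  obtain ⟨hl, hr⟩ := isPullback_coprodMap f' g'
  have hkl : (coprod.inl ≫ k) ≫ coprod.map f' g' = f ≫ coprod.inl := by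
    rw [Category.assoc, hk, coprod.inl_map]
  have hkr : (coprod.inr ≫ k) ≫ coprod.map f' g' = g ≫ coprod.inr := by
    rw [Category.assoc, hk, coprod.inr_map]
  refine ⟨hl.lift _ _ hkl, hr.lift _ _ hkr, hl.lift_snd _ _ hkl, hr.lift_snd _ _ hkr, ?_⟩
  apply coprod.hom_ext
  · exact (coprod.inl_map _ _).trans (hl.lift_fst _ _ hkl)
  · exact (coprod.inr_map _ _).trans (hr.lift_fst _ _ hkr)

end CategoryTheory.FinitaryExtensive

section coprodOver

open FinitaryExtensive

variable {C : Type*} [Category C] [FinitaryExtensive C] (a b : C)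

instance coprodOver_faithful : (coprodOver a b).Faithful where
  map_injective huv := Prod.ext_iff.mpr (by
    simpa only [Over.OverMorphism.ext_iff] using
      (coprod.map_eq_map_iff _ _ _ _).mp (congrArg CommaMorphism.left huv))

instance coprodOver_full : (coprodOver a b).Full where
  map_surjective {X Y} k := by
    obtain ⟨u, v, hu, hv, huv⟩ := exists_coprodMap_eq_of_comp_coprodMap_eq (k := k.left) (Over.w k)
    exact ⟨(Over.homMk u hu, Over.homMk v hv), by ext : 1; exact huv⟩

instance coprodOver_essSurj : (coprodOver a b).EssSurj where
  mem_essImage Z :=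
    ⟨(Over.mk (pullback.fst _ _), Over.mk (pullback.fst _ _)),
      ⟨Over.isoMk (coprodPullbackIso Z.hom) (coprodPullbackIso_hom_comp Z.hom)⟩⟩

end coprodOver

/-- In a finitary extensive category, the functor `Over a × Over b ⥤ Over (a ⨿ b)`
given by binary coproducts is an equivalence of categories. -/
theorem coprodOver_isEquivalence {C : Type*} [Category C] [FinitaryExtensive C]
    (a b : C) : (coprodOver a b).IsEquivalence :=
  { }
end
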